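/- (Corollary of Powers–Størmer) If u is a unitary n×n matrix and h is a positive semidefinite n×n matrix, then ‖u h^{1/2} − h^{1/2} u‖_HS = ‖u h^{1/2} u* − h^{1/2}‖_HS ≤ ‖u h u* − h‖₁^{1/2}. -/

import Mathlib

open Matrix
open scoped ComplexOrder

/-- The square root of a positive semidefinite matrix, as defined in the older Mathlib
(`Matrix.PosSemidef.sqrt`, since removed). -/
noncomputable def Matrix.PosSemidef.sqrt {m : Type*} [Fintype m] [DecidableEq m] {𝕜 : Type*} [RCLike 𝕜]
    {A : Matrix m m 𝕜} (hA : A.PosSemidef) : Matrix m m 𝕜 :=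
  hA.1.eigenvectorUnitary.1 * diagonal ((↑) ∘ (√·) ∘ hA.1.eigenvalues) *
    (star hA.1.eigenvectorUnitary : Matrix m m 𝕜)

/-- The Hilbert–Schmidt norm `‖x‖_HS = √(Tr(x* x))` of a complex matrix. -/
noncomputable def hsNorm {n : ℕ} (x : Matrix (Fin n) (Fin n) ℂ) : ℝ :=
  Real.sqrt ((xᴴ * x).trace.re)

/-- The trace norm `‖x‖₁ = Tr(|x|) = Tr(√(x* x))` of a complex matrix. -/
noncomputable def traceNorm {n : ℕ} (x : Matrix (Fin n) (Fin n) ℂ) : ℝ :=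
  ((Matrix.posSemidef_conjTranspose_mul_self x).sqrt).trace.re

/-!
Put `s = u h^{1/2} u*` and `t = h^{1/2}`, and work in an orthonormal eigenbasis of `s - t`,
where `s - t = diag(μ)`. Since `2 (s² - t²) = (s - t)(s + t) + (s + t)(s - t)`, the `i`-th diagonal
entry of `s² - t²` is `μᵢ (s + t)ᵢᵢ`, while `-(s + t) ≤ s - t ≤ s + t` gives `|μᵢ| ≤ (s + t)ᵢᵢ`
and `-|s² - t²| ≤ s² - t² ≤ |s² - t²|` gives `|(s² - t²)ᵢᵢ| ≤ |s² - t²|ᵢᵢ`. Hence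
`μᵢ² ≤ |s² - t²|ᵢᵢ`, and summing over `i` yields `‖s - t‖²_HS ≤ ‖s² - t²‖₁` (Powers–Størmer).
The two Hilbert–Schmidt norms agree because `u h^{1/2} - h^{1/2} u = (u h^{1/2} u* - h^{1/2}) u`.
-/

open scoped MatrixOrder
open Unitary

theorem conjStarAlgAut_nonneg {S R : Type*} [Ring R] [StarRing R] [PartialOrder R]
    [StarOrderedRing R] [SMul S R] [IsScalarTower S R R] [SMulCommClass S R R]
    (u : unitary R) {x : R} (hx : 0 ≤ x) : 0 ≤ conjStarAlgAut S R u x :=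
  star_right_conjugate_nonneg hx u

namespace Matrix

theorem abs_re_diag_le_re_diag {m 𝕜 : Type*} [RCLike 𝕜] {A B : Matrix m m 𝕜}
    (hsub : 0 ≤ B - A) (hadd : 0 ≤ B + A) (i : m) : |RCLike.re (A i i)| ≤ RCLike.re (B i i) := by
  have h₁ := (RCLike.nonneg_iff.mp (hsub.posSemidef.diag_nonneg (i := i))).1
  have h₂ := (RCLike.nonneg_iff.mp (hadd.posSemidef.diag_nonneg (i := i))).1
  simp only [sub_apply, add_apply, map_sub, map_add] at h₁ h₂
  exact abs_le.mpr ⟨by linarith, by linarith⟩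

theorem re_diagonal_mul_add_mul_diagonal_apply_self {m 𝕜 : Type*} [Fintype m] [DecidableEq m]
    [RCLike 𝕜] (μ : m → ℝ) (P : Matrix m m 𝕜) (i : m) :
    RCLike.re ((diagonal (RCLike.ofReal ∘ μ) * P + P * diagonal (RCLike.ofReal ∘ μ) :
      Matrix m m 𝕜) i i) =
      2 * μ i * RCLike.re (P i i) := by
  simp only [add_apply, diagonal_mul, mul_diagonal, Function.comp_apply, map_add,
    RCLike.re_ofReal_mul, RCLike.re_mul_ofReal]
  ring

variable {m 𝕜 : Type*} [Fintype m] [DecidableEq m] [RCLike 𝕜]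

theorem trace_conjStarAlgAut (u : unitaryGroup m 𝕜) (x : Matrix m m 𝕜) :
    (conjStarAlgAut 𝕜 _ u x).trace = x.trace := by
  rw [conjStarAlgAut_apply, trace_mul_cycle, coe_star_mul_self, one_mul]

theorem abs_re_diag_conjStarAlgAut_le {A B : Matrix m m 𝕜} (hsub : 0 ≤ B - A) (hadd : 0 ≤ B + A)
    (u : unitaryGroup m 𝕜) (i : m) :
    |RCLike.re (conjStarAlgAut 𝕜 _ u A i i)| ≤ RCLike.re (conjStarAlgAut 𝕜 _ u B i i) := by
  refine abs_re_diag_le_re_diag ?_ ?_ i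
  · rw [← map_sub]
    exact conjStarAlgAut_nonneg u hsub
  · rw [← map_add]
    exact conjStarAlgAut_nonneg u hadd

theorem abs_re_diag_conjStarAlgAut_sub_le_add {s t : Matrix m m 𝕜} (hs : 0 ≤ s) (ht : 0 ≤ t)
    (u : unitaryGroup m 𝕜) (i : m) :
    |RCLike.re (conjStarAlgAut 𝕜 _ u (s - t) i i)| ≤
      RCLike.re (conjStarAlgAut 𝕜 _ u (s + t) i i) := by
  refine abs_re_diag_conjStarAlgAut_le ?_ ?_ u i
  · rw [show s + t - (s - t) = t + t by abel]
    exact add_nonneg ht ht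
  · rw [show s + t + (s - t) = s + s by abel]
    exact add_nonneg hs hs

theorem IsHermitian.abs_re_diag_conjStarAlgAut_le_cfcAbs {c : Matrix m m 𝕜} (hc : c.IsHermitian)
    (u : unitaryGroup m 𝕜) (i : m) :
    |RCLike.re (conjStarAlgAut 𝕜 _ u c i i)| ≤
      RCLike.re (conjStarAlgAut 𝕜 _ u (CFC.abs c) i i) := by
  refine abs_re_diag_conjStarAlgAut_le ?_ ?_ u i
  · rw [CFC.abs_sub_self c hc]
    exact smul_nonneg zero_le_two (CFC.negPart_nonneg c)
  · rw [CFC.abs_add_self c hc]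
    exact smul_nonneg zero_le_two (CFC.posPart_nonneg c)

theorem PosSemidef.sqrt_eq_cfcSqrt {A : Matrix m m 𝕜} (hA : A.PosSemidef) :
    hA.sqrt = CFC.sqrt A := by
  rw [CFC.sqrt_eq_real_sqrt A hA.nonneg,
    cfcₙ_eq_cfc (hf := Real.continuous_sqrt.continuousOn) (hf0 := Real.sqrt_zero), hA.1.cfc_eq]
  rfl

theorem PosSemidef.sqrt_nonneg {A : Matrix m m 𝕜} (hA : A.PosSemidef) : 0 ≤ hA.sqrt := by
  rw [hA.sqrt_eq_cfcSqrt]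
  exact CFC.sqrt_nonneg A

theorem PosSemidef.sqrt_mul_self {A : Matrix m m 𝕜} (hA : A.PosSemidef) :
    hA.sqrt * hA.sqrt = A := by
  rw [hA.sqrt_eq_cfcSqrt]
  exact CFC.sqrt_mul_sqrt_self A hA.nonneg

theorem sqrt_conjTranspose_mul_self_eq_cfcAbs (x : Matrix m m 𝕜) :
    (posSemidef_conjTranspose_mul_self x).sqrt = CFC.abs x := by
  rw [PosSemidef.sqrt_eq_cfcSqrt, CFC.abs, star_eq_conjTranspose]

theorem re_trace_conjTranspose_sub_mul_sub_le {s t : Matrix m m 𝕜} (hs : 0 ≤ s) (ht : 0 ≤ t) :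
    RCLike.re ((s - t)ᴴ * (s - t)).trace ≤ RCLike.re (CFC.abs (s * s - t * t)).trace := by
  have hd : (s - t).IsHermitian := hs.posSemidef.1.sub ht.posSemidef.1
  have hc : (s * s - t * t).IsHermitian := by
    simp [IsHermitian, hs.posSemidef.1.eq, ht.posSemidef.1.eq]
  set W := star hd.eigenvectorUnitary
  set φ := conjStarAlgAut 𝕜 (Matrix m m 𝕜) W
  set μ := hd.eigenvalues
  have hφd : φ (s - t) = diagonal (RCLike.ofReal ∘ μ) := hd.conjStarAlgAut_star_eigenvectorUnitary
  have hμ (i : m) : |μ i| ≤ RCLike.re (φ (s + t) i i) := by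
    simpa [φ, hφd] using abs_re_diag_conjStarAlgAut_sub_le_add hs ht W i
  have hdiag (i : m) : RCLike.re (φ (s * s - t * t) i i) = μ i * RCLike.re (φ (s + t) i i) := by
    have h : φ (s * s - t * t) + φ (s * s - t * t) =
        φ (s - t) * φ (s + t) + φ (s + t) * φ (s - t) := by
      rw [← map_mul, ← map_mul, ← map_add, ← map_add]
      congr 1
      noncomm_ring
    have h' := congrArg (fun x => RCLike.re (x i i)) h
    simp only [hφd, re_diagonal_mul_add_mul_diagonal_apply_self] at h'
    simp only [add_apply, map_add (RCLike.re (K := 𝕜))] at h'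
    linarith
  have htrace_sub : RCLike.re ((s - t)ᴴ * (s - t)).trace = ∑ i, μ i ^ 2 := by
    rw [hd.eq, ← trace_conjStarAlgAut W, map_mul, hφd]
    simp [trace_diagonal, sq]
  have htrace_abs : RCLike.re (CFC.abs (s * s - t * t)).trace =
      ∑ i, RCLike.re (φ (CFC.abs (s * s - t * t)) i i) := by
    rw [← trace_conjStarAlgAut W, trace, map_sum]
    rfl
  rw [htrace_sub, htrace_abs]
  refine Finset.sum_le_sum fun i _ => ?_
  have h := hc.abs_re_diag_conjStarAlgAut_le_cfcAbs W i
  rw [hdiag, abs_mul] at h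
  calc μ i ^ 2 = |μ i| * |μ i| := by rw [sq, abs_mul_abs_self]
    _ ≤ |μ i| * |RCLike.re (φ (s + t) i i)| :=
      mul_le_mul_of_nonneg_left ((hμ i).trans (le_abs_self _)) (abs_nonneg _)
    _ ≤ _ := h

end Matrix

theorem hsNorm_mul_unitary {n : ℕ} (x : Matrix (Fin n) (Fin n) ℂ) {u : Matrix (Fin n) (Fin n) ℂ}
    (hu : u ∈ unitary (Matrix (Fin n) (Fin n) ℂ)) : hsNorm (x * u) = hsNorm x := by
  rw [hsNorm, hsNorm, conjTranspose_mul, mul_assoc, ← mul_assoc xᴴ, ← mul_assoc, trace_mul_cycle,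
    ← star_eq_conjTranspose, Unitary.mul_star_self_of_mem hu, one_mul]

theorem hsNorm_sub_le_sqrt_traceNorm {n : ℕ} {s t : Matrix (Fin n) (Fin n) ℂ} (hs : 0 ≤ s)
    (ht : 0 ≤ t) : hsNorm (s - t) ≤ Real.sqrt (traceNorm (s * s - t * t)) :=
  Real.sqrt_le_sqrt <| by
    rw [traceNorm, sqrt_conjTranspose_mul_self_eq_cfcAbs]
    exact re_trace_conjTranspose_sub_mul_sub_le hs ht

/-- Corollary of Powers–Størmer: for a unitary `u` and positive semidefinite `h`,
`‖u h^{1/2} − h^{1/2} u‖_HS = ‖u h^{1/2} u* − h^{1/2}‖_HS ≤ ‖u h u* − h‖₁^{1/2}`. -/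
theorem powers_stormer_unitary {n : ℕ} (u h : Matrix (Fin n) (Fin n) ℂ)
    (hu : u ∈ unitary (Matrix (Fin n) (Fin n) ℂ)) (hh : h.PosSemidef) :
    hsNorm (u * hh.sqrt - hh.sqrt * u) = hsNorm (u * hh.sqrt * star u - hh.sqrt) ∧
    hsNorm (u * hh.sqrt - hh.sqrt * u) ≤ Real.sqrt (traceNorm (u * h * star u - h)) := by
  set r := hh.sqrt
  have hcomm : u * r - r * u = (u * r * star u - r) * u := by
    rw [sub_mul, mul_assoc (u * r), Unitary.star_mul_self_of_mem hu, mul_one]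
  have heq : hsNorm (u * r - r * u) = hsNorm (u * r * star u - r) := by
    rw [hcomm, hsNorm_mul_unitary _ hu]
  have hsq : u * r * star u * (u * r * star u) = u * h * star u := by
    calc u * r * star u * (u * r * star u) = u * r * (star u * u) * r * star u := by
          simp only [mul_assoc]
      _ = u * h * star u := by
          rw [Unitary.star_mul_self_of_mem hu, mul_one, mul_assoc u r r, hh.sqrt_mul_self]
  refine ⟨heq, heq ▸ ?_⟩
  have h := hsNorm_sub_le_sqrt_traceNorm (star_right_conjugate_nonneg hh.sqrt_nonneg u)
    hh.sqrt_nonneg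
  rwa [hsq, hh.sqrt_mul_self] at h
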